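/- Define S* = (Λα + (γ + μ))/(αμ + β), I* = μ(R₀ − 1)/(αμ + β), R* = γ(R₀ − 1)/(αμ + β), where R₀ = βΛ/(μ(γ + μ)) and all parameters Λ, α, β, γ, μ are positive. Then (S*, I*, R*) satisfies the equilibrium equations: Λ − β S* I*/(1 + α I*) − μ S* = 0, β S* I*/(1 + α I*) − (γ + μ) I* = 0, and γ I* − μ R* = 0. -/
import Mathlib


theorem endemic_equilibrium_satisfies (Λ α β γ μ : ℝ)
    (hΛ : 0 < Λ) (hα : 0 < α) (hβ : 0 < β) (hγ : 0 < γ) (hμ : 0 < μ)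
    (R0 Sstar Istar Rstar : ℝ)
    (hR0 : R0 = β * Λ / (μ * (γ + μ)))
    (hS : Sstar = (Λ * α + (γ + μ)) / (α * μ + β))
    (hI : Istar = μ * (R0 - 1) / (α * μ + β))
    (hR : Rstar = γ * (R0 - 1) / (α * μ + β)) :
    Λ - β * Sstar * Istar / (1 + α * Istar) - μ * Sstar = 0 ∧
    β * Sstar * Istar / (1 + α * Istar) - (γ + μ) * Istar = 0 ∧
    γ * Istar - μ * Rstar = 0 := by
  have hd : (0:ℝ) < α * μ + β := by positivity
  have hgm : (0:ℝ) < γ + μ := by positivity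
  have hden : 1 + α * Istar = β * (γ + μ + α * Λ) / ((γ + μ) * (α * μ + β)) := by
    rw [hI, hR0]; field_simp; ring
  have hnum : (0:ℝ) < γ + μ + α * Λ := by positivity
  refine ⟨?_, ?_, ?_⟩
  · rw [hden, hS, hI, hR0]
    field_simp
    ring
  · rw [hden, hS, hI, hR0]
    field_simp
    ring
  · rw [hI, hR, hR0]
    field_simp
    ring
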